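/- Telescoping Fourier sum: let n ≥ 4, set μ_k := 2(1 − cos(2πk/n)) and λ_n := 1 − cos(2π/n). Then ∑_{k=2}^{n−2} 1/(μ_k/λ_n − 2) = 3/4 − (1/4)tan²(π/n). Equivalently, ∑_{k=2}^{n−2} sin²(π/n)/(2 sin((k−1)π/n) sin((k+1)π/n)) = 3/4 − (1/4)tan²(π/n). -/

import Mathlib

/-!
Put `θ = π / n`. Since `sin (x - θ) * sin (x + θ) = sin x ^ 2 - sin θ ^ 2` and `1 - cos (2 * x) = 2 * sin x ^ 2`,
the `k`-th summand of the first sum equals that of the second. As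
`cot a - cot b = sin (b - a) / (sin a * sin b)`, that summand is
`tan θ / 4 * (cot ((k - 1) * θ) - cot ((k + 1) * θ))`, so the sum telescopes to
`tan θ / 2 * (cot θ + cot (2 * θ))`, using `cot (π - x) = -cot x` for the two end terms, and the
double angle formulas turn this into `3 / 4 - tan θ ^ 2 / 4`.
-/

open Real Finset

lemma sin_sub_mul_sin_add (x θ : ℝ) :
    sin (x - θ) * sin (x + θ) = sin x ^ 2 - sin θ ^ 2 := by
  rw [sin_sub, sin_add]
  linear_combination sin x ^ 2 * cos_sq_add_sin_sq θ - sin θ ^ 2 * cos_sq_add_sin_sq x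

lemma one_div_two_mul_one_sub_cos_div_sub_two {θ : ℝ} (hθ : sin θ ≠ 0) (x : ℝ) :
    1 / (2 * (1 - cos (2 * x)) / (1 - cos (2 * θ)) - 2) =
      sin θ ^ 2 / (2 * sin (x - θ) * sin (x + θ)) := by
  have hden : 2 * (1 - cos (2 * x)) / (1 - cos (2 * θ)) - 2 =
      2 * (sin x ^ 2 - sin θ ^ 2) / sin θ ^ 2 := by
    rw [cos_two_mul_eq_one_sub, cos_two_mul_eq_one_sub]
    field_simp
    ring
  rw [hden, mul_assoc 2, sin_sub_mul_sin_add, one_div_div]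

lemma cot_sub_cot {a b : ℝ} (ha : sin a ≠ 0) (hb : sin b ≠ 0) :
    cot a - cot b = sin (b - a) / (sin a * sin b) := by
  rw [cot_eq_cos_div_sin, cot_eq_cos_div_sin, sin_sub]
  field_simp

lemma sin_sq_div_two_sin_mul_sin_eq_tan_mul_cot_sub_cot {θ x : ℝ} (hθ : cos θ ≠ 0)
    (h₁ : sin (x - θ) ≠ 0) (h₂ : sin (x + θ) ≠ 0) :
    sin θ ^ 2 / (2 * sin (x - θ) * sin (x + θ)) = tan θ / 4 * (cot (x - θ) - cot (x + θ)) := by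
  rw [cot_sub_cot h₁ h₂, show x + θ - (x - θ) = 2 * θ by ring, sin_two_mul, tan_eq_sin_div_cos]
  field_simp
  ring

lemma tan_mul_cot_add_cot_two_mul {θ : ℝ} (hs : sin θ ≠ 0) (hc : cos θ ≠ 0) :
    tan θ * (cot θ + cot (2 * θ)) = (3 - tan θ ^ 2) / 2 := by
  rw [tan_eq_sin_div_cos, cot_eq_cos_div_sin, cot_eq_cos_div_sin, sin_two_mul, cos_two_mul']
  field_simp
  ring

lemma sum_Ico_sub_one_sub_add_one {m n : ℕ} (hmn : m ≤ n) (g : ℝ → ℝ) :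
    ∑ k ∈ Ico m n, (g ((k : ℝ) - 1) - g ((k : ℝ) + 1)) =
      g ((m : ℝ) - 1) + g m - g ((n : ℝ) - 1) - g n := by
  induction n, hmn using Nat.le_induction with
  | base => simp
  | succ n hmn ih =>
    rw [sum_Ico_succ_top hmn, ih]
    push_cast
    ring_nf

lemma cot_pi_sub (x : ℝ) : cot (π - x) = -cot x := by
  rw [cot_eq_cos_div_sin, cot_eq_cos_div_sin, cos_pi_sub, sin_pi_sub, neg_div]

lemma sum_Icc_cot_sub_cot {n : ℕ} (hn : 3 ≤ n) :
    ∑ k ∈ Icc 2 (n - 2), (cot ((k - 1) * (π / n)) - cot ((k + 1) * (π / n))) =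
      2 * (cot (π / n) + cot (2 * (π / n))) := by
  have hn₀ : (n : ℝ) ≠ 0 := by positivity
  rw [← Ico_add_one_right_eq_Icc, show n - 2 + 1 = n - 1 by omega,
    sum_Ico_sub_one_sub_add_one (g := fun t ↦ cot (t * (π / n))) (by omega),
    Nat.cast_sub (by omega), Nat.cast_one]
  have h₁ : ((n : ℝ) - 1 - 1) * (π / n) = π - 2 * (π / n) := by field_simp; ring
  have h₂ : ((n : ℝ) - 1) * (π / n) = π - π / n := by field_simp
  simp only [h₁, h₂, cot_pi_sub]
  norm_num
  ring

lemma sin_mul_pi_div_ne_zero {n : ℕ} {t : ℝ} (ht₀ : 0 < t) (htn : t < n) :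
    sin (t * (π / n)) ≠ 0 := by
  have hn : (0 : ℝ) < n := ht₀.trans htn
  refine (sin_pos_of_pos_of_lt_pi (by positivity) ?_).ne'
  rw [mul_div_left_comm]
  exact mul_lt_of_lt_one_right pi_pos ((div_lt_one hn).2 htn)

lemma sum_Icc_sin_sq_div_two_sin_mul_sin {n : ℕ} (hn : 3 ≤ n) :
    ∑ k ∈ Icc 2 (n - 2),
      sin (π / n) ^ 2 / (2 * sin (((k : ℝ) - 1) * π / n) * sin (((k : ℝ) + 1) * π / n)) =
        3 / 4 - 1 / 4 * tan (π / n) ^ 2 := by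
  have hn₃ : (3 : ℝ) ≤ n := by exact_mod_cast hn
  have hθ : 0 < π / n := by positivity
  have hθ_lt : π / n < π / 2 := div_lt_div_of_pos_left pi_pos two_pos (by linarith)
  have hs : sin (π / n) ≠ 0 := (sin_pos_of_pos_of_lt_pi hθ (by linarith)).ne'
  have hc : cos (π / n) ≠ 0 := (cos_pos_of_mem_Ioo ⟨by linarith, hθ_lt⟩).ne'
  have hsummand : ∀ k ∈ Icc 2 (n - 2),
      sin (π / n) ^ 2 / (2 * sin (((k : ℝ) - 1) * π / n) * sin (((k : ℝ) + 1) * π / n)) =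
        tan (π / n) / 4 * (cot ((k - 1) * (π / n)) - cot ((k + 1) * (π / n))) := by
    intro k hk
    have hk₂ : (2 : ℝ) ≤ k := by exact_mod_cast (mem_Icc.1 hk).1
    have hkn : (k : ℝ) + 2 ≤ n := by
      have := (mem_Icc.1 hk).2
      exact_mod_cast (by omega : k + 2 ≤ n)
    have h₁ := sin_mul_pi_div_ne_zero (n := n) (t := k - 1) (by linarith) (by linarith)
    have h₂ := sin_mul_pi_div_ne_zero (n := n) (t := k + 1) (by linarith) (by linarith)
    rw [mul_div_assoc, mul_div_assoc]
    rw [sub_mul, one_mul] at h₁ ⊢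
    rw [add_mul, one_mul] at h₂ ⊢
    exact sin_sq_div_two_sin_mul_sin_eq_tan_mul_cot_sub_cot hc h₁ h₂
  rw [sum_congr rfl hsummand, ← mul_sum, sum_Icc_cot_sub_cot hn]
  linear_combination tan_mul_cot_add_cot_two_mul hs hc / 2

/-- Telescoping Fourier sum: for `n ≥ 4`, with `μ_k = 2(1 - cos(2πk/n))` and
`λ_n = 1 - cos(2π/n)`, one has
`∑_{k=2}^{n-2} 1/(μ_k/λ_n - 2) = 3/4 - (1/4)tan²(π/n)`; equivalently,
`∑_{k=2}^{n-2} sin²(π/n)/(2 sin((k-1)π/n) sin((k+1)π/n)) = 3/4 - (1/4)tan²(π/n)`. -/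
theorem telescoping_fourier_sum (n : ℕ) (hn : 4 ≤ n) :
    (∑ k ∈ Finset.Icc 2 (n - 2),
        1 / (2 * (1 - Real.cos (2 * Real.pi * k / n)) / (1 - Real.cos (2 * Real.pi / n)) - 2) =
      3 / 4 - 1 / 4 * Real.tan (Real.pi / n) ^ 2) ∧
    (∑ k ∈ Finset.Icc 2 (n - 2),
        Real.sin (Real.pi / n) ^ 2 /
          (2 * Real.sin (((k : ℝ) - 1) * Real.pi / n) * Real.sin (((k : ℝ) + 1) * Real.pi / n)) =
      3 / 4 - 1 / 4 * Real.tan (Real.pi / n) ^ 2) := by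
  have hsecond := sum_Icc_sin_sq_div_two_sin_mul_sin (by omega : 3 ≤ n)
  have hs : sin (π / n) ≠ 0 := by
    simpa using sin_mul_pi_div_ne_zero (n := n) one_pos (by exact_mod_cast (by omega : 1 < n))
  refine ⟨?_, hsecond⟩
  rw [← hsecond]
  refine sum_congr rfl fun k _ ↦ ?_
  rw [show 2 * π * k / n = 2 * (k * (π / n)) by ring, show 2 * π / n = 2 * (π / n) by ring,
    one_div_two_mul_one_sub_cos_div_sub_two hs]
  ring_nf
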